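/- arXiv:0903.2345 — 2 statements merged into one kernel-verified Lean document; each statement's English description precedes it below -/
import Mathlib

section
/- Assume (H). Then for every x ∈ ℝ^d the matrix a(x) is symmetric positive semidefinite; a(x) = 0 if x ∈ Γ; a(x) is positive definite if x ∉ Γ; and for every α > 0 there exists c > 0 such that sᵀ a(x) s ≥ c‖s‖² for all x ∈ Γ_α and all s ∈ ℝ^d. -/
/-!
Write `a(x) = ∫ h hᵀ w_x(h) dh` with the nonnegative weight `w_x(h) = [h · ∇₁g(x,x)]₊ p(x,h)`.
Then `sᵀ a(x) s = ∫ (h · s)² w_x(h) dh ≥ 0`, and `w_x = 0` when `∇₁g(x,x) = 0`. Off `Γ`, the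
symmetric probability density `p(x,·)` must charge the open half-space `{h · ∇₁g(x,x) > 0}`, where
the integrand is positive outside the null hyperplane `{h · s = 0}`. Finally `x ↦ a(x)` is
continuous by dominated convergence, with `‖∇₁g‖_∞ ‖h‖³ m(‖h‖)` as dominating function, so the
quadratic form attains a positive minimum on the compact set `Γ_α × S^{d-1}`, and homogeneity in
`s` gives the uniform bound.
-/

open MeasureTheory Real Set
open scoped RealInnerProductSpace ENNReal NNReal

noncomputable section

abbrev Euc (d : ℕ) := EuclideanSpace ℝ (Fin d)

variable {d : ℕ}

/-- gradient of `g` with respect to its first variable -/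
def grad1 (g : Euc d → Euc d → ℝ) (y x : Euc d) : Euc d :=
  gradient (fun z => g z x) y

/-- Hessian of `g` with respect to its first variable, as a continuous bilinear map -/
def hess11 (g : Euc d → Euc d → ℝ) (y x : Euc d) : Euc d →L[ℝ] Euc d →L[ℝ] ℝ :=
  fderiv ℝ (fderiv ℝ (fun z => g z x)) y

/-- set of evolutionary singularities -/
def Gam (g : Euc d → Euc d → ℝ) : Set (Euc d) := {x | grad1 g x x = 0}

def GamAlpha (g : Euc d → Euc d → ℝ) (α : ℝ) : Set (Euc d) :=
  {x | α ≤ Metric.infDist x (Gam g) ∧ ‖x‖ ≤ 1 / α}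

/-- `p` is a measurable symmetric probability-density kernel -/
def IsMutKernel (p : Euc d → Euc d → ℝ) : Prop :=
  Measurable (Function.uncurry p) ∧
  (∀ x h, 0 ≤ p x h) ∧
  (∀ x, Integrable (fun h => p x h)) ∧
  (∀ x, (∫ h, p x h) = 1) ∧
  (∀ x h, p x (-h) = p x h)

/-- Assumption (H2) -/
def H2 (p : Euc d → Euc d → ℝ) : Prop :=
  (∀ x, Integrable (fun h : Euc d => ‖h‖ ^ 3 * p x h)) ∧
  (∃ M : ℝ, ∀ x, (∫ h : Euc d, ‖h‖ ^ 3 * p x h) ≤ M) ∧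
  ∃ m : ℝ → ℝ, Measurable m ∧ (∀ r, 0 ≤ m r) ∧
    Integrable (fun h : Euc d => (‖h‖ ^ 2 ⊔ ‖h‖ ^ 3) * m ‖h‖) ∧
    (∀ x y h, |p x h - p y h| ≤ ‖x - y‖ * m ‖h‖) ∧
    (∀ x h, p x h ≤ m ‖h‖)

/-- Assumption (H1) -/
def H1 (g : Euc d → Euc d → ℝ) : Prop :=
  (∀ x : Euc d, ContDiff ℝ 2 (fun z => g z x)) ∧
  (∃ C : ℝ, ∀ y x : Euc d, ‖grad1 g y x‖ ≤ C) ∧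
  (∃ K : ℝ≥0, LipschitzWith K (fun q : Euc d × Euc d => grad1 g q.1 q.2)) ∧
  (∃ C : ℝ, ∀ y x : Euc d, ‖hess11 g y x‖ ≤ C) ∧
  (∃ K : ℝ≥0, LipschitzWith K (fun q : Euc d × Euc d => hess11 g q.1 q.2))

/-- drift coefficient b -/
def bCoeff (g p : Euc d → Euc d → ℝ) (x : Euc d) : Euc d :=
  (WithLp.equiv 2 (Fin d → ℝ)).symm fun k =>
    ∫ h : Euc d, h k * max (⟪grad1 g x x, h⟫) 0 * p x h

/-- diffusion matrix a -/
def aMat (g p : Euc d → Euc d → ℝ) (x : Euc d) : Matrix (Fin d) (Fin d) ℝ :=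
  Matrix.of fun k l => ∫ h : Euc d, h k * h l * max (⟪h, grad1 g x x⟫) 0 * p x h

/-- second-order drift coefficient b-tilde -/
def btCoeff (g p : Euc d → Euc d → ℝ) (x : Euc d) : Euc d :=
  (WithLp.equiv 2 (Fin d → ℝ)).symm fun k =>
    (1 / 2) * ∫ h in {h : Euc d | 0 < ⟪h, grad1 g x x⟫},
      h k * hess11 g x x h h * p x h

/-- quadratic form sᵀ a(x) s -/
def quadA (g p : Euc d → Euc d → ℝ) (x s : Euc d) : ℝ :=
  ∑ k, ∑ l, s k * aMat g p x k l * s l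

/-- quadratic form sᵀ a(x)⁻¹ s -/
def quadAInv (g p : Euc d → Euc d → ℝ) (x s : Euc d) : ℝ :=
  ∑ k, ∑ l, s k * (aMat g p x)⁻¹ k l * s l

/-- full Hessian of `g` (as a function on the product space) at `(y,x)` -/
def hessF (g : Euc d → Euc d → ℝ) (y x : Euc d) :
    (Euc d × Euc d) →L[ℝ] (Euc d × Euc d) →L[ℝ] ℝ :=
  fderiv ℝ (fderiv ℝ (fun q : Euc d × Euc d => g q.1 q.2)) (y, x)

/-- action of a matrix on a vector of `Euc d` -/
def mulVecE (M : Matrix (Fin d) (Fin d) ℝ) (v : Euc d) : Euc d :=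
  (WithLp.equiv 2 (Fin d → ℝ)).symm (M.mulVec (WithLp.equiv 2 (Fin d → ℝ) v))

section HalfSpace

variable {E : Type*} [NormedAddCommGroup E] [InnerProductSpace ℝ E] [FiniteDimensional ℝ E]
  [MeasurableSpace E] [BorelSpace E] (μ : Measure E) [μ.IsAddHaarMeasure]

theorem addHaar_inner_eq_zero {v : E} (hv : v ≠ 0) : μ {h | ⟪h, v⟫ = 0} = 0 := by
  have hker : {h : E | ⟪h, v⟫ = 0} = ((ℝ ∙ v)ᗮ : Submodule ℝ E) := by
    ext h
    exact Submodule.mem_orthogonal_singleton_iff_inner_left.symm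
  rw [hker]
  refine Measure.addHaar_submodule μ _ ?_
  rwa [Ne, Submodule.orthogonal_eq_top_iff, Submodule.span_singleton_eq_bot]

/-- Otherwise, by evenness, `f` would vanish a.e. on the opposite half-space as well, and the
separating hyperplane is null. -/
theorem addHaar_support_inter_inner_pos_pos {f : E → ℝ} (hf_even : ∀ h, f (-h) = f h)
    (hf : ∫ h, f h ∂μ ≠ 0) {v : E} (hv : v ≠ 0) :
    0 < μ (Function.support f ∩ {h | 0 < ⟪h, v⟫}) := by
  set S := Function.support f
  refine pos_iff_ne_zero.2 fun hpos => hf (integral_eq_zero_of_ae ?_)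
  have hneg : μ (S ∩ {h | ⟪h, v⟫ < 0}) = 0 := by
    rw [← hpos, ← Measure.measure_preimage_neg]
    congr 1
    ext h
    simp [S, hf_even, inner_neg_left]
  have hcover : S ⊆ (S ∩ {h | 0 < ⟪h, v⟫}) ∪ (S ∩ {h | ⟪h, v⟫ < 0}) ∪ {h | ⟪h, v⟫ = 0} := by
    intro h hh
    rcases lt_trichotomy 0 ⟪h, v⟫ with hlt | heq | hgt
    · exact Or.inl (Or.inl ⟨hh, hlt⟩)
    · exact Or.inr heq.symm
    · exact Or.inl (Or.inr ⟨hh, hgt⟩)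
  exact (Measure.measure_support_eq_zero_iff μ).1 <| measure_mono_null hcover <|
    measure_union_null (measure_union_null hpos hneg) (addHaar_inner_eq_zero μ hv)

end HalfSpace

section WeightedSecondMoment

theorem inner_sq_mul_eq_sum (h s : Euc d) (c : ℝ) :
    ⟪h, s⟫ ^ 2 * c = ∑ k, ∑ l, s k * (h k * h l * c) * s l := by
  simp only [PiLp.inner_apply, RCLike.inner_apply, conj_trivial, sq, Finset.sum_mul,
    Finset.mul_sum]
  exact Finset.sum_congr rfl fun k _ => Finset.sum_congr rfl fun l _ => by ring

variable {w : Euc d → ℝ}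

theorem integrable_coord_mul_coord_mul (hw_meas : AEStronglyMeasurable w)
    (hw : Integrable fun h => ‖h‖ ^ 2 * w h) (k l : Fin d) :
    Integrable fun h => h k * h l * w h := by
  refine hw.norm.mono' (by fun_prop) (Filter.Eventually.of_forall fun h => ?_)
  rw [norm_mul, norm_mul, norm_mul, norm_pow, norm_norm, sq]
  gcongr
  · exact PiLp.norm_apply_le h k
  · exact PiLp.norm_apply_le h l

theorem integrable_inner_sq_mul (hw : ∀ k l, Integrable fun h => h k * h l * w h) (s : Euc d) :
    Integrable fun h => ⟪h, s⟫ ^ 2 * w h := by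
  simp_rw [inner_sq_mul_eq_sum _ s]
  exact integrable_finsetSum _ fun k _ => integrable_finsetSum _ fun l _ =>
    ((hw k l).const_mul _).mul_const _

theorem integral_inner_sq_mul (hw : ∀ k l, Integrable fun h => h k * h l * w h) (s : Euc d) :
    ∫ h, ⟪h, s⟫ ^ 2 * w h = ∑ k, ∑ l, s k * (∫ h, h k * h l * w h) * s l := by
  simp_rw [inner_sq_mul_eq_sum _ s]
  rw [integral_finsetSum _ fun k _ => integrable_finsetSum _ fun l _ =>
    ((hw k l).const_mul _).mul_const _]
  refine Finset.sum_congr rfl fun k _ => ?_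
  rw [integral_finsetSum _ fun l _ => ((hw k l).const_mul _).mul_const _]
  simp_rw [integral_mul_const, integral_const_mul]

end WeightedSecondMoment

section DiffusionMatrix

variable {g p : Euc d → Euc d → ℝ} {x : Euc d}

def aWeight (g p : Euc d → Euc d → ℝ) (x h : Euc d) : ℝ :=
  max ⟪h, grad1 g x x⟫ 0 * p x h

theorem aMat_apply (k l : Fin d) : aMat g p x k l = ∫ h, h k * h l * aWeight g p x h := by
  simp only [aMat, aWeight, Matrix.of_apply, mul_assoc]

theorem aMat_isSymm (g p : Euc d → Euc d → ℝ) (x : Euc d) : (aMat g p x).IsSymm :=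
  Matrix.IsSymm.ext fun k l => by
    simp only [aMat_apply]
    congr 1 with h
    ring

theorem aWeight_nonneg (hp : IsMutKernel p) (h : Euc d) : 0 ≤ aWeight g p x h :=
  mul_nonneg (le_max_right _ _) (hp.2.1 x h)

theorem aWeight_le (hp : IsMutKernel p) (h : Euc d) :
    aWeight g p x h ≤ ‖grad1 g x x‖ * (‖h‖ * p x h) := by
  rw [aWeight, ← mul_assoc]
  refine mul_le_mul_of_nonneg_right (max_le ?_ (by positivity)) (hp.2.1 x h)
  exact (real_inner_le_norm h _).trans_eq (mul_comm _ _)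

theorem integrable_coord_mul_coord_mul_aWeight (hp : IsMutKernel p)
    (hp3 : Integrable fun h => ‖h‖ ^ 3 * p x h) (k l : Fin d) :
    Integrable fun h => h k * h l * aWeight g p x h := by
  have hmeas : Measurable (p x) := hp.1.comp measurable_prodMk_left
  refine integrable_coord_mul_coord_mul (by unfold aWeight; fun_prop) ?_ k l
  refine (hp3.const_mul ‖grad1 g x x‖).mono' (by unfold aWeight; fun_prop)
    (Filter.Eventually.of_forall fun h => ?_)
  rw [norm_of_nonneg (mul_nonneg (by positivity) (aWeight_nonneg hp h))]
  calc ‖h‖ ^ 2 * aWeight g p x h ≤ ‖h‖ ^ 2 * (‖grad1 g x x‖ * (‖h‖ * p x h)) := by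
        gcongr; exact aWeight_le hp h
    _ = ‖grad1 g x x‖ * (‖h‖ ^ 3 * p x h) := by ring

theorem quadA_eq_integral (hp : IsMutKernel p) (hp3 : Integrable fun h => ‖h‖ ^ 3 * p x h)
    (s : Euc d) : quadA g p x s = ∫ h, ⟪h, s⟫ ^ 2 * aWeight g p x h := by
  simp only [quadA, aMat_apply,
    integral_inner_sq_mul (integrable_coord_mul_coord_mul_aWeight hp hp3) s]

theorem quadA_nonneg (hp : IsMutKernel p) (hp3 : Integrable fun h => ‖h‖ ^ 3 * p x h)
    (s : Euc d) : 0 ≤ quadA g p x s := by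
  rw [quadA_eq_integral hp hp3]
  exact integral_nonneg fun h => mul_nonneg (sq_nonneg _) (aWeight_nonneg hp h)

theorem aMat_eq_zero_of_mem_Gam (hx : x ∈ Gam g) : aMat g p x = 0 := by
  ext k l
  simp [aMat, show grad1 g x x = 0 from hx]

theorem quadA_pos_of_notMem_Gam (hp : IsMutKernel p) (hp3 : Integrable fun h => ‖h‖ ^ 3 * p x h)
    (hx : x ∉ Gam g) {s : Euc d} (hs : s ≠ 0) : 0 < quadA g p x s := by
  have hv : grad1 g x x ≠ 0 := hx
  have ⟨_, hpnn, _, hpone, hpeven⟩ := hp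
  rw [quadA_eq_integral hp hp3, integral_pos_iff_support_of_nonneg
    (fun h => mul_nonneg (sq_nonneg _) (aWeight_nonneg hp h))
    (integrable_inner_sq_mul (integrable_coord_mul_coord_mul_aWeight hp hp3) s)]
  have hsupp : (Function.support (p x) ∩ {h | 0 < ⟪h, grad1 g x x⟫}) \ {h | ⟪h, s⟫ = 0} ⊆
      Function.support fun h => ⟪h, s⟫ ^ 2 * aWeight g p x h := by
    rintro h ⟨⟨hph, hvh⟩, hsh⟩
    have hph : 0 < p x h := (hpnn x h).lt_of_ne' hph
    have hsh : ⟪h, s⟫ ≠ 0 := hsh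
    rw [Function.mem_support, aWeight, max_eq_left hvh.le]
    exact (mul_pos (pow_two_pos_of_ne_zero hsh) (mul_pos hvh hph)).ne'
  calc 0 < volume (Function.support (p x) ∩ {h | 0 < ⟪h, grad1 g x x⟫}) :=
        addHaar_support_inter_inner_pos_pos volume (hpeven x) (by simp [hpone]) hv
    _ = _ := (measure_sdiff_null (addHaar_inner_eq_zero volume hs)).symm
    _ ≤ _ := measure_mono hsupp

end DiffusionMatrix

section Continuity

variable {g p : Euc d → Euc d → ℝ}

theorem continuous_aMat_apply (hp : IsMutKernel p) (hg : H1 g) (hp2 : H2 p) (k l : Fin d) :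
    Continuous fun x => aMat g p x k l := by
  obtain ⟨-, ⟨C, hC⟩, ⟨K, hK⟩, -, -⟩ := hg
  obtain ⟨-, -, m, hm_meas, hm_nonneg, hm_int, hm_lip, hp_le⟩ := hp2
  have hp_meas (x : Euc d) : Measurable (p x) := hp.1.comp measurable_prodMk_left
  have hgrad : Continuous fun x => grad1 g x x :=
    hK.continuous.comp (continuous_id.prodMk continuous_id)
  have hp_cont (h : Euc d) : Continuous fun x => p x h :=
    (LipschitzWith.of_dist_le_mul (K := (m ‖h‖).toNNReal) fun x y => by
      rw [Real.dist_eq, dist_eq_norm, Real.coe_toNNReal _ (hm_nonneg _), mul_comm]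
      exact hm_lip x y h).continuous
  have hbound : Integrable fun h : Euc d => C * (‖h‖ ^ 3 * m ‖h‖) := by
    refine (hm_int.mono' (by fun_prop) (Filter.Eventually.of_forall fun h => ?_)).const_mul C
    rw [norm_of_nonneg (mul_nonneg (by positivity) (hm_nonneg _))]
    exact mul_le_mul_of_nonneg_right le_sup_right (hm_nonneg _)
  simp_rw [aMat_apply]
  refine continuous_of_dominated (fun x => by unfold aWeight; fun_prop)
    (fun x => Filter.Eventually.of_forall fun h => ?_) hbound
    (Filter.Eventually.of_forall fun h => by unfold aWeight; fun_prop)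
  have hweight : aWeight g p x h ≤ C * (‖h‖ * m ‖h‖) :=
    (aWeight_le hp h).trans (mul_le_mul (hC x x) (by gcongr; exact hp_le x h)
      (mul_nonneg (norm_nonneg h) (hp.2.1 x h))
      ((norm_nonneg _).trans (hC x x)))
  rw [norm_mul, norm_mul, norm_of_nonneg (aWeight_nonneg hp h)]
  calc ‖h k‖ * ‖h l‖ * aWeight g p x h ≤ ‖h‖ * ‖h‖ * (C * (‖h‖ * m ‖h‖)) := by
        gcongr
        exacts [aWeight_nonneg hp h, PiLp.norm_apply_le h k, PiLp.norm_apply_le h l]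
    _ = C * (‖h‖ ^ 3 * m ‖h‖) := by ring

theorem continuous_quadA (hp : IsMutKernel p) (hg : H1 g) (hp2 : H2 p) :
    Continuous fun xs : Euc d × Euc d => quadA g p xs.1 xs.2 := by
  have hcoord (k : Fin d) : Continuous fun s : Euc d => s k := (EuclideanSpace.proj k).continuous
  refine continuous_finsetSum _ fun k _ => continuous_finsetSum _ fun l _ => ?_
  exact (((hcoord k).comp continuous_snd).mul
    ((continuous_aMat_apply hp hg hp2 k l).comp continuous_fst)).mul
    ((hcoord l).comp continuous_snd)

theorem quadA_smul (g p : Euc d → Euc d → ℝ) (x s : Euc d) (t : ℝ) :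
    quadA g p x (t • s) = t ^ 2 * quadA g p x s := by
  simp only [quadA, Finset.mul_sum, PiLp.smul_apply, smul_eq_mul]
  exact Finset.sum_congr rfl fun k _ => Finset.sum_congr rfl fun l _ => by ring

end Continuity

theorem IsCompact.exists_pos_mul_sq_norm_le {X E : Type*} [TopologicalSpace X]
    [NormedAddCommGroup E] [NormedSpace ℝ E] [ProperSpace E] {Q : X → E → ℝ}
    (hQ : Continuous fun xs : X × E => Q xs.1 xs.2)
    (hQ_smul : ∀ x s (t : ℝ), Q x (t • s) = t ^ 2 * Q x s) {K : Set X} (hK : IsCompact K)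
    (hQ_pos : ∀ x ∈ K, ∀ s ≠ 0, 0 < Q x s) :
    ∃ c, 0 < c ∧ ∀ x ∈ K, ∀ s, c * ‖s‖ ^ 2 ≤ Q x s := by
  have hQ_zero (x : X) : Q x 0 = 0 := by simpa using hQ_smul x 0 0
  have hQ_normalize (x : X) {s : E} (hs : s ≠ 0) : Q x s = Q x (‖s‖⁻¹ • s) * ‖s‖ ^ 2 := by
    have : ‖s‖ ≠ 0 := norm_ne_zero_iff.2 hs
    rw [hQ_smul]
    field_simp
  have hmem {x : X} (hx : x ∈ K) {s : E} (hs : s ≠ 0) :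
      (x, ‖s‖⁻¹ • s) ∈ K ×ˢ Metric.sphere (0 : E) 1 :=
    ⟨hx, mem_sphere_zero_iff_norm.2 (norm_smul_inv_norm hs)⟩
  suffices ∃ c, 0 < c ∧ ∀ x ∈ K, ∀ s ≠ 0, c ≤ Q x (‖s‖⁻¹ • s) by
    obtain ⟨c, hc, hle⟩ := this
    refine ⟨c, hc, fun x hx s => ?_⟩
    rcases eq_or_ne s 0 with rfl | hs
    · simp [hQ_zero]
    · rw [hQ_normalize x hs]
      gcongr
      exact hle x hx s hs
  rcases (K ×ˢ Metric.sphere (0 : E) 1).eq_empty_or_nonempty with hT | hT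
  · exact ⟨1, one_pos, fun x hx s hs => absurd (hmem hx hs) (hT ▸ Set.notMem_empty _)⟩
  obtain ⟨z, ⟨hz, hz_norm⟩, hmin⟩ :=
    (hK.prod (isCompact_sphere 0 1)).exists_isMinOn hT hQ.continuousOn
  exact ⟨Q z.1 z.2, hQ_pos _ hz _ (ne_zero_of_mem_unit_sphere ⟨z.2, hz_norm⟩),
    fun x hx s hs => hmin (hmem hx hs)⟩

theorem isCompact_GamAlpha (g : Euc d → Euc d → ℝ) (α : ℝ) : IsCompact (GamAlpha g α) := by
  refine Metric.isCompact_of_isClosed_isBounded ?_ ?_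
  · exact (isClosed_le continuous_const (Metric.continuous_infDist_pt _)).inter
      (isClosed_le continuous_norm continuous_const)
  · exact (Metric.isBounded_closedBall (x := 0) (r := 1 / α)).subset
      fun x hx => mem_closedBall_zero_iff.2 hx.2

theorem notMem_Gam_of_mem_GamAlpha {g : Euc d → Euc d → ℝ} {α : ℝ} (hα : 0 < α) {x : Euc d}
    (hx : x ∈ GamAlpha g α) : x ∉ Gam g := fun hΓ =>
  hα.not_ge (hx.1.trans_eq (Metric.infDist_zero_of_mem hΓ))

theorem stmt4_general {d : ℕ} (g p : Euc d → Euc d → ℝ)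
    (hker : IsMutKernel p) (hH1 : H1 g) (hH2 : H2 p) :
    (∀ x : Euc d, (aMat g p x).IsSymm) ∧
    (∀ x s : Euc d, 0 ≤ quadA g p x s) ∧
    (∀ x ∈ Gam g, aMat g p x = 0) ∧
    (∀ x : Euc d, x ∉ Gam g → ∀ s : Euc d, s ≠ 0 → 0 < quadA g p x s) ∧
    (∀ α : ℝ, 0 < α → ∃ c : ℝ, 0 < c ∧
      ∀ x ∈ GamAlpha g α, ∀ s : Euc d, c * ‖s‖ ^ 2 ≤ quadA g p x s) := by
  have hp3 := hH2.1
  refine ⟨aMat_isSymm g p, fun x => quadA_nonneg hker (hp3 x),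
    fun x => aMat_eq_zero_of_mem_Gam, fun x hx s => quadA_pos_of_notMem_Gam hker (hp3 x) hx,
    fun α hα => ?_⟩
  exact (isCompact_GamAlpha g α).exists_pos_mul_sq_norm_le (continuous_quadA hker hH1 hH2)
    (quadA_smul g p) fun x hx s hs =>
      quadA_pos_of_notMem_Gam hker (hp3 x) (notMem_Gam_of_mem_GamAlpha hα hx) hs

theorem stmt4 {d : ℕ} (hd : 1 ≤ d) (g p : Euc d → Euc d → ℝ)
    (hker : IsMutKernel p) (hH1 : H1 g) (hH2 : H2 p) :
    (∀ x : Euc d, (aMat g p x).IsSymm) ∧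
    (∀ x s : Euc d, 0 ≤ quadA g p x s) ∧
    (∀ x ∈ Gam g, aMat g p x = 0) ∧
    (∀ x : Euc d, x ∉ Gam g → ∀ s : Euc d, s ≠ 0 → 0 < quadA g p x s) ∧
    (∀ α : ℝ, 0 < α → ∃ c : ℝ, 0 < c ∧
      ∀ x ∈ GamAlpha g α, ∀ s : Euc d, c * ‖s‖ ^ 2 ≤ quadA g p x s) :=
  stmt4_general g p hker hH1 hH2
end
end

section
/- Assume (H). Let σ(x) denote the unique symmetric positive semidefinite square root of the matrix a(x). Then σ is bounded on ℝ^d, globally Hölder continuous with exponent 1/2 on ℝ^d, and locally Lipschitz on ℝ^d \ Γ (with respect to any fixed matrix norm). -/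
open MeasureTheory Real Set
open scoped RealInnerProductSpace ENNReal NNReal

noncomputable section

variable {d : ℕ}

/-!
The diffusion matrix is `a(x) = ∫ h hᵀ [h·∇₁g(x,x)]₊ p(x,h) dh`. By (H1) and (H2) its quadratic
form is bounded and Lipschitz in `x`, and since `p(x,·)` is even, `[t]₊` may be replaced by `|t|/2`,
so `a(x)` is positive definite off `Γ`. Everything about `σ = √a` then comes from one identity:
if `(S - T) v = λ v` with `‖v‖ = 1`, then `⟪(S² - T²) v, v⟫ = λ (⟪S v, v⟫ + ⟪T v, v⟫)`. For
positive `S`, `T` the weight dominates `|λ|`, so `λ² ≤ ‖S² - T²‖`, which gives the Hölder bound;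
if moreover `S, T ≥ δ`, the weight is at least `2δ`, so `|λ| ≤ ‖S² - T²‖ / (2δ)`, which gives the
Lipschitz bound near points where `a` is uniformly positive definite.
-/

namespace LinearMap.IsSymmetric

variable {E : Type*} [NormedAddCommGroup E] [InnerProductSpace ℝ E] {T : E →ₗ[ℝ] E}

theorem norm_apply_sq_eq_inner_mul_self (hT : T.IsSymmetric) (v : E) :
    ‖T v‖ ^ 2 = ⟪(T * T) v, v⟫ := by
  rw [Module.End.mul_apply, hT, real_inner_self_eq_norm_sq]

theorem norm_apply_le_sqrt_of_inner_mul_self_le (hT : T.IsSymmetric) {C : ℝ}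
    (hC : ∀ v, ⟪(T * T) v, v⟫ ≤ C * ‖v‖ ^ 2) (v : E) : ‖T v‖ ≤ √C * ‖v‖ := by
  rw [← Real.sqrt_sq (norm_nonneg v), ← Real.sqrt_mul' _ (sq_nonneg _)]
  exact Real.le_sqrt_of_sq_le ((hT.norm_apply_sq_eq_inner_mul_self v).trans_le (hC v))

theorem inner_mul_self_sub_mul_self_eq {S : E →ₗ[ℝ] E} (hS : S.IsSymmetric) (hT : T.IsSymmetric)
    {v : E} {μ : ℝ}
    (hv : (S - T) v = μ • v) : ⟪(S * S - T * T) v, v⟫ = μ * (⟪S v, v⟫ + ⟪T v, v⟫) := by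
  have hsplit : (S * S - T * T) v = S ((S - T) v) + (S - T) (T v) := by
    simp only [sub_apply, Module.End.mul_apply, map_sub]; abel
  rw [hsplit, inner_add_left, (hS.sub hT) (T v), hv, map_smul, real_inner_smul_left,
    real_inner_smul_right, real_inner_comm v]
  ring

variable [FiniteDimensional ℝ E] {n : ℕ}

theorem apply_eigenvectorBasis_real (hT : T.IsSymmetric) (hn : Module.finrank ℝ E = n) (i : Fin n) :
    T (hT.eigenvectorBasis hn i) = hT.eigenvalues hn i • hT.eigenvectorBasis hn i := by
  simp [hT.apply_eigenvectorBasis hn i]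

theorem inner_apply_self_eq_sum (hT : T.IsSymmetric) (hn : Module.finrank ℝ E = n) (x : E) :
    ⟪T x, x⟫ = ∑ i, hT.eigenvalues hn i * ⟪hT.eigenvectorBasis hn i, x⟫ ^ 2 := by
  rw [← (hT.eigenvectorBasis hn).sum_inner_mul_inner]
  refine Finset.sum_congr rfl fun i _ => ?_
  rw [hT, hT.apply_eigenvectorBasis_real, real_inner_smul_right, real_inner_comm]
  ring

theorem norm_apply_sq_eq_sum (hT : T.IsSymmetric) (hn : Module.finrank ℝ E = n) (x : E) :
    ‖T x‖ ^ 2 = ∑ i, hT.eigenvalues hn i ^ 2 * ⟪hT.eigenvectorBasis hn i, x⟫ ^ 2 := by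
  rw [← (hT.eigenvectorBasis hn).sum_sq_inner_right]
  refine Finset.sum_congr rfl fun i _ => ?_
  rw [← hT, hT.apply_eigenvectorBasis_real, real_inner_smul_left]
  ring

theorem norm_apply_le_of_abs_eigenvalues_le (hT : T.IsSymmetric) (hn : Module.finrank ℝ E = n)
    {c : ℝ} (hc : 0 ≤ c) (h : ∀ i, |hT.eigenvalues hn i| ≤ c) (x : E) : ‖T x‖ ≤ c * ‖x‖ := by
  refine (pow_le_pow_iff_left₀ (norm_nonneg _) (by positivity) two_ne_zero).mp ?_
  rw [hT.norm_apply_sq_eq_sum hn, mul_pow, ← (hT.eigenvectorBasis hn).sum_sq_inner_right,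
    Finset.mul_sum]
  refine Finset.sum_le_sum fun i _ => mul_le_mul_of_nonneg_right ?_ (sq_nonneg _)
  exact sq_le_sq' (abs_le.mp (h i)).1 (abs_le.mp (h i)).2

theorem mul_norm_sq_le_inner_apply_self (hT : T.IsSymmetric) (hn : Module.finrank ℝ E = n)
    {δ : ℝ} (h : ∀ i, δ ≤ hT.eigenvalues hn i) (x : E) : δ * ‖x‖ ^ 2 ≤ ⟪T x, x⟫ := by
  rw [hT.inner_apply_self_eq_sum hn, ← (hT.eigenvectorBasis hn).sum_sq_inner_right, Finset.mul_sum]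
  exact Finset.sum_le_sum fun i _ => mul_le_mul_of_nonneg_right (h i) (sq_nonneg _)

theorem exists_pos_mul_norm_sq_le_inner (hT : T.IsSymmetric) (hpos : ∀ v ≠ 0, 0 < ⟪T v, v⟫) :
    ∃ μ > 0, ∀ v, μ * ‖v‖ ^ 2 ≤ ⟪T v, v⟫ := by
  have heig (i) : 0 < hT.eigenvalues rfl i := by
    have hb := (hT.eigenvectorBasis rfl).orthonormal.1 i
    simpa [hT.apply_eigenvectorBasis_real, real_inner_smul_left, hb] using
      hpos _ (ne_zero_of_norm_ne_zero (hb.trans_ne one_ne_zero))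
  obtain ⟨μ, hμ, hle⟩ : ∃ μ > 0, ∀ i, μ ≤ hT.eigenvalues rfl i := by
    cases isEmpty_or_nonempty (Fin (Module.finrank ℝ E)) with
    | inl _ => exact ⟨1, one_pos, isEmptyElim⟩
    | inr _ =>
      obtain ⟨i₀, hi₀⟩ := Finite.exists_min (hT.eigenvalues rfl)
      exact ⟨_, heig i₀, hi₀⟩
  exact ⟨μ, hμ, hT.mul_norm_sq_le_inner_apply_self rfl hle⟩

end LinearMap.IsSymmetric

namespace LinearMap.IsPositive

variable {E : Type*} [NormedAddCommGroup E] [InnerProductSpace ℝ E] {S T : E →ₗ[ℝ] E}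

theorem abs_eigenvalue_sub_le (hS : S.IsPositive) (hT : T.IsPositive) {ε : ℝ}
    (hε : ∀ v, |⟪(S * S - T * T) v, v⟫| ≤ ε * ‖v‖ ^ 2) {v : E} {μ : ℝ} (hv : (S - T) v = μ • v)
    (hv1 : ‖v‖ = 1) :
    |μ| ≤ ⟪S v, v⟫ + ⟪T v, v⟫ ∧ |μ| * (⟪S v, v⟫ + ⟪T v, v⟫) ≤ ε := by
  have hSv := hS.inner_nonneg_left v
  have hTv := hT.inner_nonneg_left v
  have hμ : μ = ⟪S v, v⟫ - ⟪T v, v⟫ := by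
    rw [← inner_sub_left, ← sub_apply, hv, real_inner_smul_left, real_inner_self_eq_norm_sq, hv1]
    ring
  refine ⟨abs_le.mpr ⟨by linarith, by linarith⟩, ?_⟩
  have := hε v
  rwa [hS.isSymmetric.inner_mul_self_sub_mul_self_eq hT.isSymmetric hv, abs_mul,
    abs_of_nonneg (add_nonneg hSv hTv), hv1, one_pow, mul_one] at this

variable [FiniteDimensional ℝ E]

theorem norm_sub_apply_le_sqrt (hS : S.IsPositive) (hT : T.IsPositive) {ε : ℝ}
    (hε : ∀ v, |⟪(S * S - T * T) v, v⟫| ≤ ε * ‖v‖ ^ 2) (x : E) :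
    ‖(S - T) x‖ ≤ √ε * ‖x‖ := by
  have hD := hS.isSymmetric.sub hT.isSymmetric
  refine hD.norm_apply_le_of_abs_eigenvalues_le rfl (Real.sqrt_nonneg _) (fun i => ?_) x
  obtain ⟨hle, hmul⟩ := abs_eigenvalue_sub_le hS hT hε (hD.apply_eigenvectorBasis_real rfl i)
    ((hD.eigenvectorBasis rfl).orthonormal.1 i)
  refine Real.abs_le_sqrt ?_
  rw [← sq_abs]
  nlinarith [abs_nonneg (hD.eigenvalues rfl i)]

theorem norm_sub_apply_le_div (hS : S.IsPositive) (hT : T.IsPositive) {ε δ : ℝ} (hε0 : 0 ≤ ε)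
    (hδ : 0 < δ) (hSδ : ∀ v, δ * ‖v‖ ^ 2 ≤ ⟪S v, v⟫) (hTδ : ∀ v, δ * ‖v‖ ^ 2 ≤ ⟪T v, v⟫)
    (hε : ∀ v, |⟪(S * S - T * T) v, v⟫| ≤ ε * ‖v‖ ^ 2) (x : E) :
    ‖(S - T) x‖ ≤ ε / (2 * δ) * ‖x‖ := by
  have hD := hS.isSymmetric.sub hT.isSymmetric
  refine hD.norm_apply_le_of_abs_eigenvalues_le rfl (by positivity) (fun i => ?_) x
  set b := hD.eigenvectorBasis rfl i
  have hb : ‖b‖ = 1 := (hD.eigenvectorBasis rfl).orthonormal.1 i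
  obtain ⟨-, hmul⟩ := abs_eigenvalue_sub_le hS hT hε (hD.apply_eigenvectorBasis_real rfl i) hb
  have h2δ : 2 * δ ≤ ⟪S b, b⟫ + ⟪T b, b⟫ := by
    have hSb := hSδ b
    have hTb := hTδ b
    rw [hb, one_pow, mul_one] at hSb hTb
    linarith
  rw [le_div_iff₀ (by positivity)]
  nlinarith [abs_nonneg (hD.eigenvalues rfl i)]

theorem sqrt_mul_norm_sq_le_inner (hS : S.IsPositive) {μ : ℝ}
    (hμ : ∀ v, μ * ‖v‖ ^ 2 ≤ ⟪(S * S) v, v⟫) (v : E) : √μ * ‖v‖ ^ 2 ≤ ⟪S v, v⟫ := by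
  refine hS.isSymmetric.mul_norm_sq_le_inner_apply_self rfl (fun i => ?_) v
  have hb := (hS.isSymmetric.eigenvectorBasis rfl).orthonormal.1 i
  have hsq := hμ (hS.isSymmetric.eigenvectorBasis rfl i)
  rw [← hS.isSymmetric.norm_apply_sq_eq_inner_mul_self, hS.isSymmetric.apply_eigenvectorBasis_real,
    norm_smul, hb, Real.norm_eq_abs, mul_one, one_pow, mul_one, sq_abs] at hsq
  calc √μ ≤ √(hS.isSymmetric.eigenvalues rfl i ^ 2) := Real.sqrt_le_sqrt hsq
    _ = _ := Real.sqrt_sq (hS.nonneg_eigenvalues rfl i)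

end LinearMap.IsPositive

namespace Matrix

variable {n : Type*} [Fintype n] [DecidableEq n]

theorem abs_apply_le_of_norm_toEuclideanLin_le {A : Matrix n n ℝ} {c : ℝ}
    (h : ∀ v, ‖A.toEuclideanLin v‖ ≤ c * ‖v‖) (k l : n) : |A k l| ≤ c := by
  have hcol : (A.toEuclideanLin (EuclideanSpace.single l 1)) k = A k l := by
    simp [Matrix.toLpLin_apply]
  calc |A k l| = ‖(A.toEuclideanLin (EuclideanSpace.single l 1)) k‖ := by
        rw [hcol, Real.norm_eq_abs]
    _ ≤ ‖A.toEuclideanLin (EuclideanSpace.single l 1)‖ := PiLp.norm_apply_le _ k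
    _ ≤ c := by simpa using h (EuclideanSpace.single l 1)

theorem abs_sub_apply_le_of_norm_toEuclideanLin_sub_le {A B : Matrix n n ℝ} {c : ℝ}
    (h : ∀ v, ‖(A.toEuclideanLin - B.toEuclideanLin) v‖ ≤ c * ‖v‖) (k l : n) :
    |A k l - B k l| ≤ c := by
  simpa using abs_apply_le_of_norm_toEuclideanLin_le (A := A - B) (by simpa using h) k l

theorem inner_toEuclideanLin_self (A : Matrix n n ℝ) (v : EuclideanSpace ℝ n) :
    ⟪A.toEuclideanLin v, v⟫ = ∑ k, ∑ l, v k * A k l * v l := by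
  simp [Matrix.toLpLin_apply, PiLp.inner_apply, Matrix.mulVec, dotProduct, Finset.mul_sum,
    mul_comm, mul_left_comm, mul_assoc]

end Matrix

open Filter

theorem MeasureTheory.Integrable.mul_of_abs_le_mul_norm_pow_three {E : Type*}
    [NormedAddCommGroup E] [MeasurableSpace E] {μ : Measure E} {f q : E → ℝ} {B : ℝ}
    (hf : Measurable f) (hq : Measurable q) (hq0 : ∀ h, 0 ≤ q h)
    (hq3 : Integrable (fun h => ‖h‖ ^ 3 * q h) μ)
    (hfB : ∀ h, |f h| ≤ B * ‖h‖ ^ 3) : Integrable (fun h => f h * q h) μ := by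
  refine (hq3.const_mul B).mono' (hf.mul hq).aestronglyMeasurable
    (Eventually.of_forall fun h => ?_)
  rw [Real.norm_eq_abs, abs_mul, abs_of_nonneg (hq0 h), ← mul_assoc]
  exact mul_le_mul_of_nonneg_right (hfB h) (hq0 h)

section Integrals

variable {E : Type*} [NormedAddCommGroup E] [InnerProductSpace ℝ E]

theorem abs_max_inner_zero_le_norm_mul_norm (h u : E) : |max ⟪h, u⟫ 0| ≤ ‖h‖ * ‖u‖ :=
  (abs_max_le_max_abs_abs.trans_eq (by simp)).trans (abs_real_inner_le_norm h u)

theorem real_inner_sq_le_norm_sq_mul_norm_sq (v h : E) : ⟪v, h⟫ ^ 2 ≤ ‖v‖ ^ 2 * ‖h‖ ^ 2 := by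
  rw [← mul_pow, ← sq_abs]
  exact pow_le_pow_left₀ (abs_nonneg _) (abs_real_inner_le_norm v h) 2

theorem abs_max_inner_mul_sub_le (h u u' : E) {a b c : ℝ} (ha0 : 0 ≤ a) (hac : a ≤ c) :
    |max ⟪h, u⟫ 0 * a - max ⟪h, u'⟫ 0 * b| ≤ ‖h‖ * (‖u - u'‖ * c + ‖u'‖ * |a - b|) := by
  have hsplit : max ⟪h, u⟫ 0 * a - max ⟪h, u'⟫ 0 * b =
      (max ⟪h, u⟫ 0 - max ⟪h, u'⟫ 0) * a + max ⟪h, u'⟫ 0 * (a - b) := by ring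
  have hdiff : |max ⟪h, u⟫ 0 - max ⟪h, u'⟫ 0| ≤ ‖h‖ * ‖u - u'‖ := by
    refine (abs_max_sub_max_le_abs _ _ _).trans ?_
    rw [← inner_sub_right]
    exact abs_real_inner_le_norm h _
  rw [hsplit, mul_add]
  refine (abs_add_le _ _).trans (add_le_add ?_ ?_) <;> rw [abs_mul]
  · rw [abs_of_nonneg ha0, ← mul_assoc]
    exact mul_le_mul hdiff hac ha0 (by positivity)
  · rw [← mul_assoc]
    exact mul_le_mul_of_nonneg_right (abs_max_inner_zero_le_norm_mul_norm h u') (abs_nonneg _)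

variable [MeasurableSpace E] {μ : Measure E}

theorem two_mul_integral_mul_max_inner [MeasurableNeg E] [μ.IsNegInvariant] {F q : E → ℝ}
    (hF : ∀ h, F (-h) = F h) (hq : ∀ h, q (-h) = q h) (u : E)
    (hint : Integrable (fun h => F h * max ⟪h, u⟫ 0 * q h) μ) :
    2 * ∫ h, F h * max ⟪h, u⟫ 0 * q h ∂μ = ∫ h, F h * |⟪h, u⟫| * q h ∂μ := by
  have hneg : ∫ h, F h * max ⟪h, u⟫ 0 * q h ∂μ = ∫ h, F h * max (-⟪h, u⟫) 0 * q h ∂μ := by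
    rw [← integral_neg_eq_self]
    simp only [hF, hq, inner_neg_left]
  have hint_neg : Integrable (fun h => F h * max (-⟪h, u⟫) 0 * q h) μ := by
    simpa only [hF, hq, inner_neg_left] using hint.comp_neg
  rw [two_mul]
  nth_rewrite 2 [hneg]
  rw [← integral_add hint hint_neg]
  congr 1 with h
  rw [← max_zero_add_max_neg_zero_eq_abs_self]
  ring

theorem ae_inner_ne_zero [BorelSpace E] [FiniteDimensional ℝ E] [μ.IsAddHaarMeasure] {w : E}
    (hw : w ≠ 0) : ∀ᵐ h ∂μ, ⟪w, h⟫ ≠ 0 := by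
  have hker : LinearMap.ker (innerₛₗ ℝ w) ≠ ⊤ := fun htop =>
    hw (by simpa using LinearMap.ext_iff.mp (LinearMap.ker_eq_top.mp htop) w)
  rw [ae_iff]
  convert Measure.addHaar_submodule μ _ hker
  ext h
  simp

end Integrals

section DiffusionMatrix

variable {g p : Euc d → Euc d → ℝ}

theorem IsMutKernel.measurable_apply (hker : IsMutKernel p) (x : Euc d) :
    Measurable (p x) :=
  hker.1.comp measurable_prodMk_left

theorem abs_apply_mul_apply_le (h : Euc d) (k l : Fin d) : |h k * h l| ≤ ‖h‖ ^ 2 := by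
  rw [abs_mul, sq]
  exact mul_le_mul (PiLp.norm_apply_le h k) (PiLp.norm_apply_le h l) (abs_nonneg _) (norm_nonneg _)

theorem quadA_eq_integral_s5 (hker : IsMutKernel p) (hH2 : H2 p) (x v : Euc d) :
    quadA g p x v = ∫ h, ⟪v, h⟫ ^ 2 * max ⟪h, grad1 g x x⟫ 0 * p x h := by
  set u := grad1 g x x
  have hint (k l : Fin d) :
      Integrable fun h : Euc d => h k * h l * max ⟪h, u⟫ 0 * p x h := by
    refine (Integrable.mul_of_abs_le_mul_norm_pow_three (B := ‖u‖) (by fun_prop)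
      (hker.measurable_apply x) (hker.2.1 x) (hH2.1 x) fun h => ?_)
    rw [abs_mul, pow_succ, mul_comm ‖u‖, mul_assoc]
    exact mul_le_mul (abs_apply_mul_apply_le h k l) (abs_max_inner_zero_le_norm_mul_norm h u)
      (abs_nonneg _) (sq_nonneg _)
  have hexpand (h : Euc d) : ⟪v, h⟫ ^ 2 * max ⟪h, u⟫ 0 * p x h =
      ∑ k, ∑ l, v k * v l * (h k * h l * max ⟪h, u⟫ 0 * p x h) := by
    have hsq : ⟪v, h⟫ ^ 2 = ∑ k, ∑ l, v k * v l * (h k * h l) := by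
      simp only [PiLp.inner_apply, RCLike.inner_apply, conj_trivial, sq, Finset.sum_mul_sum]
      exact Finset.sum_congr rfl fun k _ => Finset.sum_congr rfl fun l _ => by ring
    simp only [hsq, Finset.sum_mul]
    exact Finset.sum_congr rfl fun k _ => Finset.sum_congr rfl fun l _ => by ring
  simp_rw [hexpand]
  rw [integral_finsetSum _ fun k _ => integrable_finsetSum _ fun l _ => (hint k l).const_mul _]
  refine Finset.sum_congr rfl fun k _ => ?_
  rw [integral_finsetSum _ fun l _ => (hint k l).const_mul _]
  refine Finset.sum_congr rfl fun l _ => ?_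
  rw [integral_const_mul, aMat, Matrix.of_apply]
  ring

theorem integrable_inner_sq_mul_mul (hker : IsMutKernel p) (hH2 : H2 p) (x v : Euc d)
    {G : Euc d → ℝ} {c : ℝ} (hG : Measurable G) (hGc : ∀ h, |G h| ≤ ‖h‖ * c) :
    Integrable fun h => ⟪v, h⟫ ^ 2 * G h * p x h := by
  refine Integrable.mul_of_abs_le_mul_norm_pow_three (B := ‖v‖ ^ 2 * c) (by fun_prop)
    (hker.measurable_apply x) (hker.2.1 x) (hH2.1 x) fun h => ?_
  rw [abs_mul, abs_of_nonneg (sq_nonneg _)]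
  calc _ ≤ ‖v‖ ^ 2 * ‖h‖ ^ 2 * (‖h‖ * c) :=
        mul_le_mul (real_inner_sq_le_norm_sq_mul_norm_sq v h) (hGc h) (abs_nonneg _) (by positivity)
    _ = _ := by ring

theorem integrable_inner_sq_mul_max_inner (hker : IsMutKernel p) (hH2 : H2 p) (x v u : Euc d) :
    Integrable fun h => ⟪v, h⟫ ^ 2 * max ⟪h, u⟫ 0 * p x h :=
  integrable_inner_sq_mul_mul hker hH2 x v (by fun_prop) (abs_max_inner_zero_le_norm_mul_norm · u)

theorem exists_quadA_le (hker : IsMutKernel p) (hH1 : H1 g) (hH2 : H2 p) :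
    ∃ C, ∀ x v, quadA g p x v ≤ C * ‖v‖ ^ 2 := by
  obtain ⟨-, ⟨Cg, hCg⟩, -⟩ := hH1
  obtain ⟨M, hM⟩ := hH2.2.1
  have hCg0 : 0 ≤ Cg := (norm_nonneg _).trans (hCg 0 0)
  refine ⟨Cg * M, fun x v => ?_⟩
  have hpt (h : Euc d) : ⟪v, h⟫ ^ 2 * max ⟪h, grad1 g x x⟫ 0 * p x h ≤
      ‖v‖ ^ 2 * Cg * (‖h‖ ^ 3 * p x h) := by
    have hmax : max ⟪h, grad1 g x x⟫ 0 ≤ ‖h‖ * Cg :=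
      ((le_abs_self _).trans (abs_max_inner_zero_le_norm_mul_norm h _)).trans
        (mul_le_mul_of_nonneg_left (hCg x x) (norm_nonneg h))
    calc _ ≤ ‖v‖ ^ 2 * ‖h‖ ^ 2 * (‖h‖ * Cg) * p x h := by
          gcongr
          exacts [hker.2.1 x h, real_inner_sq_le_norm_sq_mul_norm_sq v h]
      _ = _ := by ring
  calc quadA g p x v ≤ ∫ h, ‖v‖ ^ 2 * Cg * (‖h‖ ^ 3 * p x h) := by
        rw [quadA_eq_integral_s5 hker hH2]
        exact integral_mono (integrable_inner_sq_mul_max_inner hker hH2 x v _)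
          ((hH2.1 x).const_mul _) hpt
    _ ≤ ‖v‖ ^ 2 * Cg * M := by
        rw [integral_const_mul]
        exact mul_le_mul_of_nonneg_left (hM x) (by positivity)
    _ = Cg * M * ‖v‖ ^ 2 := by ring

theorem exists_abs_quadA_sub_le (hker : IsMutKernel p) (hH1 : H1 g) (hH2 : H2 p) :
    ∃ L, 0 ≤ L ∧ ∀ x y v, |quadA g p x v - quadA g p y v| ≤ L * ‖x - y‖ * ‖v‖ ^ 2 := by
  obtain ⟨-, ⟨Cg, hCg⟩, ⟨K, hK⟩, -⟩ := hH1
  obtain ⟨m, -, hm0, hmint, hmlip, hmle⟩ := hH2.2.2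
  have hCg0 : 0 ≤ Cg := (norm_nonneg _).trans (hCg 0 0)
  set I := ∫ h : Euc d, (‖h‖ ^ 2 ⊔ ‖h‖ ^ 3) * m ‖h‖
  have hI : 0 ≤ I := integral_nonneg fun h => mul_nonneg (by positivity) (hm0 _)
  refine ⟨(K + Cg) * I, by positivity, fun x y v => ?_⟩
  have hgrad : ‖grad1 g x x - grad1 g y y‖ ≤ K * ‖x - y‖ := by
    simpa [← dist_eq_norm, Prod.dist_eq] using hK.dist_le_mul (x, x) (y, y)
  have hpt (h : Euc d) :
      ‖⟪v, h⟫ ^ 2 * max ⟪h, grad1 g x x⟫ 0 * p x h - ⟪v, h⟫ ^ 2 * max ⟪h, grad1 g y y⟫ 0 * p y h‖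
        ≤ (K + Cg) * ‖x - y‖ * ‖v‖ ^ 2 * ((‖h‖ ^ 2 ⊔ ‖h‖ ^ 3) * m ‖h‖) := by
    have hw := abs_max_inner_mul_sub_le h (grad1 g x x) (grad1 g y y) (hker.2.1 x h) (hmle x h)
      (b := p y h)
    have hw' : |max ⟪h, grad1 g x x⟫ 0 * p x h - max ⟪h, grad1 g y y⟫ 0 * p y h| ≤
        ‖h‖ * ((K + Cg) * ‖x - y‖ * m ‖h‖) := by
      refine hw.trans (mul_le_mul_of_nonneg_left ?_ (norm_nonneg h))
      have := add_le_add (mul_le_mul_of_nonneg_right hgrad (hm0 ‖h‖))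
        (mul_le_mul (hCg y y) (hmlip x y h) (abs_nonneg _) hCg0)
      linarith
    rw [Real.norm_eq_abs, mul_assoc, mul_assoc, ← mul_sub, abs_mul, abs_of_nonneg (sq_nonneg _)]
    calc _ ≤ ‖v‖ ^ 2 * ‖h‖ ^ 2 * (‖h‖ * ((K + Cg) * ‖x - y‖ * m ‖h‖)) :=
          mul_le_mul (real_inner_sq_le_norm_sq_mul_norm_sq v h) hw' (abs_nonneg _) (by positivity)
      _ = (K + Cg) * ‖x - y‖ * ‖v‖ ^ 2 * (‖h‖ ^ 3 * m ‖h‖) := by ring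
      _ ≤ _ := by gcongr; exacts [hm0 _, le_max_right _ _]
  rw [quadA_eq_integral_s5 hker hH2, quadA_eq_integral_s5 hker hH2,
    ← integral_sub (integrable_inner_sq_mul_max_inner hker hH2 x v _)
      (integrable_inner_sq_mul_max_inner hker hH2 y v _)]
  calc _ ≤ ∫ h, (K + Cg) * ‖x - y‖ * ‖v‖ ^ 2 * ((‖h‖ ^ 2 ⊔ ‖h‖ ^ 3) * m ‖h‖) :=
        norm_integral_le_of_norm_le (hmint.const_mul _) (Eventually.of_forall hpt)
    _ = (K + Cg) * I * ‖x - y‖ * ‖v‖ ^ 2 := by rw [integral_const_mul]; ring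

theorem quadA_pos (hker : IsMutKernel p) (hH2 : H2 p) {x : Euc d} (hx : x ∉ Gam g) {v : Euc d}
    (hv : v ≠ 0) : 0 < quadA g p x v := by
  set u := grad1 g x x
  have hu : u ≠ 0 := hx
  set f : Euc d → ℝ := fun h => ⟪v, h⟫ ^ 2 * |⟪h, u⟫| * p x h
  have hf0 : 0 ≤ f := fun h => by have := hker.2.1 x h; positivity
  have hfint : Integrable f :=
    integrable_inner_sq_mul_mul hker hH2 x v (by fun_prop) fun h =>
      (abs_abs _).trans_le (abs_real_inner_le_norm h u)
  have hsymm := two_mul_integral_mul_max_inner (μ := volume) (F := fun h => ⟪v, h⟫ ^ 2)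
    (fun h => by simp [inner_neg_right]) (hker.2.2.2.2 x) u
    (integrable_inner_sq_mul_max_inner hker hH2 x v u)
  rw [quadA_eq_integral_s5 hker hH2]
  suffices 0 < ∫ h, f h by linarith
  refine (integral_nonneg hf0).lt_of_ne fun h0 => ?_
  have hp0 : p x =ᵐ[volume] 0 := by
    filter_upwards [(integral_eq_zero_iff_of_nonneg hf0 hfint).mp h0.symm, ae_inner_ne_zero hv,
      ae_inner_ne_zero hu] with h hfh hvh huh
    rw [real_inner_comm] at huh
    simpa [f, hvh, huh] using hfh
  simpa [integral_congr_ae hp0] using hker.2.2.2.1 x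

theorem aMat_isHermitian (x : Euc d) : (aMat g p x).IsHermitian :=
  Matrix.IsHermitian.ext fun k l => by simp [aMat, mul_comm]

theorem exists_ball_mul_norm_sq_le_quadA (hker : IsMutKernel p) (hH1 : H1 g) (hH2 : H2 p)
    {x : Euc d} (hx : x ∉ Gam g) :
    ∃ μ > 0, ∃ ε > 0, ∀ y ∈ Metric.ball x ε, ∀ v, μ * ‖v‖ ^ 2 ≤ quadA g p y v := by
  obtain ⟨L, hL0, hL⟩ := exists_abs_quadA_sub_le hker hH1 hH2
  have hsymm : (aMat g p x).toEuclideanLin.IsSymmetric :=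
    Matrix.isSymmetric_toEuclideanLin_iff.mpr (aMat_isHermitian x)
  obtain ⟨μ, hμ, hμx⟩ := hsymm.exists_pos_mul_norm_sq_le_inner fun v hv => by
    rw [Matrix.inner_toEuclideanLin_self]
    exact quadA_pos hker hH2 hx hv
  refine ⟨μ / 2, by positivity, μ / (2 * (L + 1)), by positivity, fun y hy v => ?_⟩
  have hxy : L * ‖x - y‖ ≤ μ / 2 := by
    rw [Metric.mem_ball, dist_comm, dist_eq_norm] at hy
    calc L * ‖x - y‖ ≤ (L + 1) * (μ / (2 * (L + 1))) := by gcongr; linarith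
      _ = μ / 2 := by field_simp
  have hx_ge : μ * ‖v‖ ^ 2 ≤ quadA g p x v := by
    simpa only [Matrix.inner_toEuclideanLin_self, quadA] using hμx v
  have hclose := (abs_le.mp (hL x y v)).2
  nlinarith [mul_le_mul_of_nonneg_right hxy (sq_nonneg ‖v‖)]

theorem inner_toEuclideanLin_mul_self_eq_quadA {x : Euc d} {S : Matrix (Fin d) (Fin d) ℝ}
    (hS : S * S = aMat g p x) (v : Euc d) :
    ⟪(S.toEuclideanLin * S.toEuclideanLin) v, v⟫ = quadA g p x v := by
  rw [Module.End.mul_eq_comp, ← Matrix.toLpLin_mul_same, hS, Matrix.inner_toEuclideanLin_self,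
    quadA]

end DiffusionMatrix

theorem stmt5_general {d : ℕ} (g p : Euc d → Euc d → ℝ)
    (hker : IsMutKernel p) (hH1 : H1 g) (hH2 : H2 p)
    (σ : Euc d → Matrix (Fin d) (Fin d) ℝ)
    (hσ : ∀ x : Euc d, (σ x).PosSemidef ∧ σ x * σ x = aMat g p x) :
    (∃ C : ℝ, ∀ (x : Euc d) (k l : Fin d), |σ x k l| ≤ C) ∧
    (∃ C : ℝ, ∀ (x y : Euc d) (k l : Fin d),
      |σ x k l - σ y k l| ≤ C * ‖x - y‖ ^ ((1 : ℝ) / 2)) ∧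
    (∀ x : Euc d, x ∉ Gam g → ∃ ε : ℝ, 0 < ε ∧ ∃ L : ℝ,
      ∀ y ∈ Metric.ball x ε, ∀ z ∈ Metric.ball x ε, ∀ k l : Fin d,
        |σ y k l - σ z k l| ≤ L * ‖y - z‖) := by
  obtain ⟨C, hC⟩ := exists_quadA_le hker hH1 hH2
  obtain ⟨L, hL0, hL⟩ := exists_abs_quadA_sub_le hker hH1 hH2
  set S := fun x => (σ x).toEuclideanLin
  have hS (x) : (S x).IsPositive := Matrix.isPositive_toEuclideanLin_iff.mpr (hσ x).1
  have hSS (x v) := inner_toEuclideanLin_mul_self_eq_quadA (hσ x).2 v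
  have hSS_sub (x y v) : |⟪(S x * S x - S y * S y) v, v⟫| ≤ L * ‖x - y‖ * ‖v‖ ^ 2 := by
    rw [LinearMap.sub_apply, inner_sub_left, hSS, hSS]
    exact hL x y v
  refine ⟨⟨√C, fun x => Matrix.abs_apply_le_of_norm_toEuclideanLin_le
      ((hS x).isSymmetric.norm_apply_le_sqrt_of_inner_mul_self_le
        fun v => (hSS x v).trans_le (hC x v))⟩,
    ⟨√L, fun x y k l => ?_⟩, fun x hx => ?_⟩
  · rw [← Real.sqrt_eq_rpow, ← Real.sqrt_mul hL0]
    exact Matrix.abs_sub_apply_le_of_norm_toEuclideanLin_sub_le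
      ((hS x).norm_sub_apply_le_sqrt (hS y) (hSS_sub x y)) k l
  · obtain ⟨μ, hμ, ε, hε, hball⟩ := exists_ball_mul_norm_sq_le_quadA hker hH1 hH2 hx
    have hlow (y) (hy : y ∈ Metric.ball x ε) v : √μ * ‖v‖ ^ 2 ≤ ⟪S y v, v⟫ :=
      (hS y).sqrt_mul_norm_sq_le_inner (fun v => (hSS y v).symm ▸ hball y hy v) v
    refine ⟨ε, hε, L / (2 * √μ), fun y hy z hz k l => ?_⟩
    rw [div_mul_eq_mul_div]
    exact Matrix.abs_sub_apply_le_of_norm_toEuclideanLin_sub_le ((hS y).norm_sub_apply_le_div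
      (hS z) (by positivity) (by positivity) (hlow y hy) (hlow z hz) (hSS_sub y z)) k l

theorem stmt5 {d : ℕ} (hd : 1 ≤ d) (g p : Euc d → Euc d → ℝ)
    (hker : IsMutKernel p) (hH1 : H1 g) (hH2 : H2 p)
    (σ : Euc d → Matrix (Fin d) (Fin d) ℝ)
    (hσ : ∀ x : Euc d, (σ x).PosSemidef ∧ σ x * σ x = aMat g p x) :
    (∃ C : ℝ, ∀ (x : Euc d) (k l : Fin d), |σ x k l| ≤ C) ∧
    (∃ C : ℝ, ∀ (x y : Euc d) (k l : Fin d),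
      |σ x k l - σ y k l| ≤ C * ‖x - y‖ ^ ((1 : ℝ) / 2)) ∧
    (∀ x : Euc d, x ∉ Gam g → ∃ ε : ℝ, 0 < ε ∧ ∃ L : ℝ,
      ∀ y ∈ Metric.ball x ε, ∀ z ∈ Metric.ball x ε, ∀ k l : Fin d,
        |σ y k l - σ z k l| ≤ L * ‖y - z‖) :=
  stmt5_general g p hker hH1 hH2 σ hσ
end
end
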